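/- For i = 1,2 let A_i = {(x,y) ∈ ℝ² : |x| ≤ γ_i/2, |y − m_i x| ≤ δ/2} with 0 < δ ≤ γ₂ ≤ γ₁ and slopes |m_i| ≤ K for a fixed constant K, and let α = |arctan m₁ − arctan m₂|. Then there is a constant C depending only on K such that |A₁ + A₂| ≤ C · γ₁ (δ + γ₂ α), where A₁ + A₂ is the Minkowski sum. -/

import Mathlib

/-!
Write a point of `A₁ + A₂` as `u + v`. Measured against the slope `m₁`, its vertical offset is
the offset of `u`, plus the offset of `v` relative to the slope `m₂`, plus the drift
`(m₂ - m₁) v.1`. Hence `A₁ + A₂` lies in one parallelogram of slope `m₁`, width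
`γ₁ + γ₂ ≤ 2 γ₁` and height `2 δ + |m₁ - m₂| γ₂`, whose area a shear shows to be width times
height. Since `arctan' ≥ 1 / (1 + K²)` on `[-K, K]`, `|m₁ - m₂| ≤ (1 + K²) α`.
-/

open MeasureTheory Set
open scoped ENNReal Pointwise

def parallelogram (a m r : ℝ) : Set (ℝ × ℝ) :=
  {p | |p.1| ≤ a ∧ |p.2 - m * p.1| ≤ r}

lemma measurePreserving_shear (m : ℝ) :
    MeasurePreserving (fun p : ℝ × ℝ => (p.1, p.2 - m * p.1)) volume volume := by
  rw [Measure.volume_eq_prod]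
  exact (MeasurePreserving.id volume).skew_product (g := fun x y => y - m * x) (by fun_prop)
    (ae_of_all _ fun x => map_sub_right_eq_self volume (m * x))

lemma volume_parallelogram (a m r : ℝ) :
    volume (parallelogram a m r) = ENNReal.ofReal (2 * a) * ENNReal.ofReal (2 * r) := by
  have h : parallelogram a m r =
      (fun p : ℝ × ℝ => (p.1, p.2 - m * p.1)) ⁻¹' (Icc (-a) a ×ˢ Icc (-r) r) := by
    ext p
    simp only [parallelogram, mem_preimage, mem_prod, mem_Icc, abs_le, mem_ofPred_eq]
  rw [h, (measurePreserving_shear m).measure_preimage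
      (measurableSet_Icc.prod measurableSet_Icc).nullMeasurableSet,
    Measure.volume_eq_prod, Measure.prod_prod, Real.volume_Icc, Real.volume_Icc]
  ring_nf

lemma parallelogram_add_subset (a₁ a₂ m₁ m₂ r₁ r₂ : ℝ) :
    parallelogram a₁ m₁ r₁ + parallelogram a₂ m₂ r₂ ⊆
      parallelogram (a₁ + a₂) m₁ (r₁ + r₂ + |m₁ - m₂| * a₂) := by
  rintro _ ⟨u, ⟨hu₁, hu₂⟩, v, ⟨hv₁, hv₂⟩, rfl⟩
  refine ⟨(abs_add_le _ _).trans (add_le_add hu₁ hv₁), ?_⟩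
  have hdrift : |(m₂ - m₁) * v.1| ≤ |m₁ - m₂| * a₂ := by
    rw [abs_mul, abs_sub_comm]
    exact mul_le_mul_of_nonneg_left hv₁ (abs_nonneg _)
  calc |(u + v).2 - m₁ * (u + v).1|
      = |(u.2 - m₁ * u.1) + (v.2 - m₂ * v.1) + (m₂ - m₁) * v.1| := by
        simp only [Prod.fst_add, Prod.snd_add]; ring_nf
    _ ≤ |u.2 - m₁ * u.1| + |v.2 - m₂ * v.1| + |(m₂ - m₁) * v.1| := abs_add_three _ _ _
    _ ≤ r₁ + r₂ + |m₁ - m₂| * a₂ := add_le_add (add_le_add hu₂ hv₂) hdrift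

lemma abs_sub_le_mul_abs_arctan_sub {K x y : ℝ} (hx : |x| ≤ K) (hy : |y| ≤ K) :
    |x - y| ≤ (1 + K ^ 2) * |Real.arctan x - Real.arctan y| := by
  wlog hxy : y ≤ x generalizing x y
  · rw [abs_sub_comm x, abs_sub_comm (Real.arctan x)]
    exact this hy hx (le_of_not_ge hxy)
  have hderiv : ∀ t ∈ interior (Icc (-K) K), 1 / (1 + K ^ 2) ≤ deriv Real.arctan t := by
    intro t ht
    rw [interior_Icc] at ht
    simp only [Real.deriv_arctan]
    exact one_div_le_one_div_of_le (by positivity)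
      (add_le_add_right (sq_le_sq' ht.1.le ht.2.le) 1)
  have hmvt := (convex_Icc (-K) K).mul_sub_le_image_sub_of_le_deriv
    Real.continuous_arctan.continuousOn Real.differentiable_arctan.differentiableOn hderiv
    y (abs_le.mp hy) x (abs_le.mp hx) hxy
  rw [abs_of_nonneg (sub_nonneg.mpr hxy),
    abs_of_nonneg (sub_nonneg.mpr (Real.arctan_strictMono.monotone hxy))]
  rwa [div_mul_eq_mul_div, one_mul, div_le_iff₀' (by positivity)] at hmvt

theorem statement13_general (K : ℝ) :
    ∃ C > 0, ∀ δ γ₁ γ₂ m₁ m₂ : ℝ, 0 < δ → δ ≤ γ₂ → γ₂ ≤ γ₁ →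
      |m₁| ≤ K → |m₂| ≤ K →
      volume ({p : ℝ × ℝ | |p.1| ≤ γ₁ / 2 ∧ |p.2 - m₁ * p.1| ≤ δ / 2} +
              {p : ℝ × ℝ | |p.1| ≤ γ₂ / 2 ∧ |p.2 - m₂ * p.1| ≤ δ / 2}) ≤
        ENNReal.ofReal
          (C * γ₁ * (δ + γ₂ * |Real.arctan m₁ - Real.arctan m₂|)) := by
  refine ⟨4 * (1 + K ^ 2), by positivity, fun δ γ₁ γ₂ m₁ m₂ hδ hδγ₂ hγ hm₁ hm₂ => ?_⟩
  set α := |Real.arctan m₁ - Real.arctan m₂|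
  have hγ₂ : 0 ≤ γ₂ := hδ.le.trans hδγ₂
  have hα : 0 ≤ α := abs_nonneg _
  have hheight :
      2 * (δ / 2 + δ / 2 + |m₁ - m₂| * (γ₂ / 2)) ≤ 2 * ((1 + K ^ 2) * (δ + γ₂ * α)) := by
    nlinarith [mul_le_mul_of_nonneg_right (abs_sub_le_mul_abs_arctan_sub hm₁ hm₂) hγ₂,
      mul_nonneg hδ.le (sq_nonneg K), mul_nonneg hγ₂ hα]
  calc volume (parallelogram (γ₁ / 2) m₁ (δ / 2) + parallelogram (γ₂ / 2) m₂ (δ / 2))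
      ≤ volume (parallelogram (γ₁ / 2 + γ₂ / 2) m₁ (δ / 2 + δ / 2 + |m₁ - m₂| * (γ₂ / 2))) :=
        measure_mono (parallelogram_add_subset _ _ _ _ _ _)
    _ = ENNReal.ofReal (2 * (γ₁ / 2 + γ₂ / 2)) *
          ENNReal.ofReal (2 * (δ / 2 + δ / 2 + |m₁ - m₂| * (γ₂ / 2))) :=
        volume_parallelogram _ _ _
    _ = ENNReal.ofReal (2 * (γ₁ / 2 + γ₂ / 2) * (2 * (δ / 2 + δ / 2 + |m₁ - m₂| * (γ₂ / 2)))) :=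
        (ENNReal.ofReal_mul (by linarith)).symm
    _ ≤ ENNReal.ofReal (4 * (1 + K ^ 2) * γ₁ * (δ + γ₂ * α)) := by
        refine ENNReal.ofReal_le_ofReal ?_
        calc _ ≤ 2 * γ₁ * (2 * ((1 + K ^ 2) * (δ + γ₂ * α))) :=
              mul_le_mul (by linarith) hheight (by positivity) (by linarith)
          _ = 4 * (1 + K ^ 2) * γ₁ * (δ + γ₂ * α) := by ring

/-- Area bound for the Minkowski sum of two thin parallelograms:
`|A₁ + A₂| ≤ C γ₁ (δ + γ₂ α)`, where `α` is the angle between them. -/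
theorem statement13 (K : ℝ) (hK : 0 < K) :
    ∃ C > 0, ∀ δ γ₁ γ₂ m₁ m₂ : ℝ, 0 < δ → δ ≤ γ₂ → γ₂ ≤ γ₁ →
      |m₁| ≤ K → |m₂| ≤ K →
      volume ({p : ℝ × ℝ | |p.1| ≤ γ₁ / 2 ∧ |p.2 - m₁ * p.1| ≤ δ / 2} +
              {p : ℝ × ℝ | |p.1| ≤ γ₂ / 2 ∧ |p.2 - m₂ * p.1| ≤ δ / 2}) ≤
        ENNReal.ofReal
          (C * γ₁ * (δ + γ₂ * |Real.arctan m₁ - Real.arctan m₂|)) :=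
  statement13_general K
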